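/- The stationary distribution of the truncated AoII Markov chain is unique: if φ₁, φ₂ : S → ℝ both satisfy φ_k(s) ≥ 0 for all s, ∑_{s∈S} φ_k(s) = 1, and ∑_{s∈S} φ_k(s)·P(s, s') = φ_k(s') for all s' ∈ S (k = 1, 2), then φ₁ = φ₂. -/
import Mathlib

/-- State space of the truncated AoII Markov chain:
`S = {(0,0)} ∪ {(f,g) : 1 ≤ f ≤ F, 1 ≤ g ≤ min f G}`. -/
def aoiiStates (F G : ℕ) : Finset (ℕ × ℕ) :=
  (Finset.range (F + 1) ×ˢ Finset.range (G + 1)).filter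
    (fun s => s = (0, 0) ∨ (1 ≤ s.1 ∧ s.1 ≤ F ∧ 1 ≤ s.2 ∧ s.2 ≤ min s.1 G))

/-- Transition matrix of the truncated AoII Markov chain, with `p_r = 1 - 2 p_t`
and truncation `[x]_T = min x T`; probabilities of coinciding target states
are added. -/
noncomputable def aoiiP (F G : ℕ) (pt : ℝ) (q : ℕ × ℕ → ℝ) (s s' : ℕ × ℕ) : ℝ :=
  if s = (0, 0) then
    (if s' = (1, 1) then 2 * pt else 0) +
    (if s' = (0, 0) then 1 - 2 * pt else 0)
  else if s.2 = 1 then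
    (if s' = (min (s.1 + 1) F, 2) then pt * (1 - q s) else 0) +
    (if s' = (min (s.1 + 1) F, 1) then (1 - 2 * pt) * (1 - q s) else 0) +
    (if s' = (0, 0) then pt + (1 - pt) * q s else 0)
  else
    (if s' = (min (s.1 + 1) F, min (s.2 + 1) G) then pt * (1 - q s) else 0) +
    (if s' = (min (s.1 + 1) F, s.2 - 1) then pt * (1 - q s) else 0) +
    (if s' = (min (s.1 + 1) F, s.2) then (1 - 2 * pt) * (1 - q s) else 0) +
    (if s' = (0, 0) then q s else 0)

lemma aoii_mem {F G a b : ℕ} :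
    (a, b) ∈ aoiiStates F G ↔ (a = 0 ∧ b = 0) ∨ (1 ≤ a ∧ a ≤ F ∧ 1 ≤ b ∧ b ≤ min a G) := by
  simp only [aoiiStates, Finset.mem_filter, Finset.mem_product, Finset.mem_range,
    Prod.mk.injEq]
  omega

lemma aoiiP_nonneg {F G : ℕ} {pt : ℝ} {q : ℕ × ℕ → ℝ} (hpt0 : 0 < pt) (hpt : pt < 1 / 2)
    {s : ℕ × ℕ} (hq0 : 0 ≤ q s) (hq1 : q s < 1) (s' : ℕ × ℕ) :
    0 ≤ aoiiP F G pt q s s' := by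
  unfold aoiiP
  split_ifs <;> nlinarith

lemma aoiiP_row {F G : ℕ} (hGF : G ≤ F) (hG : 2 ≤ G) (pt : ℝ) (q : ℕ × ℕ → ℝ)
    {s : ℕ × ℕ} (hs : s ∈ aoiiStates F G) :
    ∑ s' ∈ aoiiStates F G, aoiiP F G pt q s s' = 1 := by
  obtain ⟨a, b⟩ := s
  rcases aoii_mem.mp hs with ⟨ha, hb⟩ | ⟨h1, h2, h3, h4⟩
  · subst ha; subst hb
    have key : ∀ x : ℕ × ℕ, aoiiP F G pt q (0, 0) x =
        (if x = (1, 1) then 2 * pt else 0) + (if x = (0, 0) then 1 - 2 * pt else 0) := by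
      intro x; simp [aoiiP]
    rw [Finset.sum_congr rfl (fun x _ => key x)]
    rw [Finset.sum_add_distrib, Finset.sum_ite_eq', Finset.sum_ite_eq']
    have m1 : ((1 : ℕ), (1 : ℕ)) ∈ aoiiStates F G := by rw [aoii_mem]; omega
    have m0 : ((0 : ℕ), (0 : ℕ)) ∈ aoiiStates F G := by rw [aoii_mem]; omega
    rw [if_pos m1, if_pos m0]; ring
  · rcases Nat.eq_or_lt_of_le h3 with hb1 | hb2
    · -- b = 1
      subst hb1
      have key : ∀ x : ℕ × ℕ, aoiiP F G pt q (a, 1) x =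
          (if x = (min (a + 1) F, 2) then pt * (1 - q (a, 1)) else 0) +
          (if x = (min (a + 1) F, 1) then (1 - 2 * pt) * (1 - q (a, 1)) else 0) +
          (if x = (0, 0) then pt + (1 - pt) * q (a, 1) else 0) := by
        intro x
        have hne : ((a, 1) : ℕ × ℕ) ≠ (0, 0) := by simp
        unfold aoiiP; rw [if_neg hne, if_pos rfl]
      rw [Finset.sum_congr rfl (fun x _ => key x)]
      rw [Finset.sum_add_distrib, Finset.sum_add_distrib,
        Finset.sum_ite_eq', Finset.sum_ite_eq', Finset.sum_ite_eq']
      have m1 : ((min (a + 1) F : ℕ), (2 : ℕ)) ∈ aoiiStates F G := by rw [aoii_mem]; omega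
      have m2 : ((min (a + 1) F : ℕ), (1 : ℕ)) ∈ aoiiStates F G := by rw [aoii_mem]; omega
      have m0 : ((0 : ℕ), (0 : ℕ)) ∈ aoiiStates F G := by rw [aoii_mem]; omega
      rw [if_pos m1, if_pos m2, if_pos m0]; ring
    · -- 2 ≤ b
      have key : ∀ x : ℕ × ℕ, aoiiP F G pt q (a, b) x =
          (if x = (min (a + 1) F, min (b + 1) G) then pt * (1 - q (a, b)) else 0) +
          (if x = (min (a + 1) F, b - 1) then pt * (1 - q (a, b)) else 0) +
          (if x = (min (a + 1) F, b) then (1 - 2 * pt) * (1 - q (a, b)) else 0) +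
          (if x = (0, 0) then q (a, b) else 0) := by
        intro x
        have hne : ((a, b) : ℕ × ℕ) ≠ (0, 0) := by simp [Prod.ext_iff]; omega
        have hb1 : ((a, b) : ℕ × ℕ).2 ≠ 1 := by simp; omega
        unfold aoiiP; rw [if_neg hne, if_neg hb1]
      rw [Finset.sum_congr rfl (fun x _ => key x)]
      rw [Finset.sum_add_distrib, Finset.sum_add_distrib, Finset.sum_add_distrib,
        Finset.sum_ite_eq', Finset.sum_ite_eq', Finset.sum_ite_eq', Finset.sum_ite_eq']
      have m1 : ((min (a + 1) F : ℕ), (min (b + 1) G : ℕ)) ∈ aoiiStates F G := by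
        rw [aoii_mem]; omega
      have m2 : ((min (a + 1) F : ℕ), (b - 1 : ℕ)) ∈ aoiiStates F G := by rw [aoii_mem]; omega
      have m3 : ((min (a + 1) F : ℕ), (b : ℕ)) ∈ aoiiStates F G := by rw [aoii_mem]; omega
      have m0 : ((0 : ℕ), (0 : ℕ)) ∈ aoiiStates F G := by rw [aoii_mem]; omega
      rw [if_pos m1, if_pos m2, if_pos m3, if_pos m0]; ring

/-- `Qfun n s` = probability of being at `(0,0)` after `n` steps starting from `s`. -/
noncomputable def Qfun (F G : ℕ) (pt : ℝ) (q : ℕ × ℕ → ℝ) : ℕ → (ℕ × ℕ) → ℝ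
  | 0, s => if s = (0, 0) then 1 else 0
  | n + 1, s => ∑ s' ∈ aoiiStates F G, aoiiP F G pt q s s' * Qfun F G pt q n s'

lemma Qfun_nonneg {F G : ℕ} {pt : ℝ} {q : ℕ × ℕ → ℝ} (hpt0 : 0 < pt) (hpt : pt < 1 / 2)
    (hq : ∀ s ∈ aoiiStates F G, 0 ≤ q s ∧ q s < 1) :
    ∀ n, ∀ s ∈ aoiiStates F G, 0 ≤ Qfun F G pt q n s := by
  intro n
  induction n with
  | zero => intro s _; unfold Qfun; split <;> norm_num
  | succ n ih =>
    intro s hs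
    unfold Qfun
    exact Finset.sum_nonneg fun s' hs' =>
      mul_nonneg (aoiiP_nonneg hpt0 hpt (hq s hs).1 (hq s hs).2 s') (ih s' hs')

lemma Qfun_lower {F G : ℕ} {pt : ℝ} {q : ℕ × ℕ → ℝ} (hpt0 : 0 < pt) (hpt : pt < 1 / 2)
    (hq : ∀ s ∈ aoiiStates F G, 0 ≤ q s ∧ q s < 1) (n : ℕ)
    {s t : ℕ × ℕ} (hs : s ∈ aoiiStates F G) (ht : t ∈ aoiiStates F G) :
    aoiiP F G pt q s t * Qfun F G pt q n t ≤ Qfun F G pt q (n + 1) s := by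
  show _ ≤ ∑ s' ∈ aoiiStates F G, aoiiP F G pt q s s' * Qfun F G pt q n s'
  exact Finset.single_le_sum (f := fun s' => aoiiP F G pt q s s' * Qfun F G pt q n s')
    (fun s' hs' => mul_nonneg (aoiiP_nonneg hpt0 hpt (hq s hs).1 (hq s hs).2 s')
      (Qfun_nonneg hpt0 hpt hq n s' hs')) ht

lemma Qfun_pos {F G : ℕ} (hGF : G ≤ F) (hG : 2 ≤ G) {pt : ℝ} {q : ℕ × ℕ → ℝ}
    (hpt0 : 0 < pt) (hpt : pt < 1 / 2)
    (hq : ∀ s ∈ aoiiStates F G, 0 ≤ q s ∧ q s < 1) :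
    ∀ n, ∀ s ∈ aoiiStates F G, s.2 ≤ n → 0 < Qfun F G pt q n s := by
  intro n
  induction n with
  | zero =>
    rintro ⟨a, b⟩ hs hb
    have := aoii_mem.mp hs
    have ha : a = 0 ∧ b = 0 := by omega
    simp [Qfun, ha.1, ha.2]
  | succ n ih =>
    rintro ⟨a, b⟩ hs hb
    obtain ⟨hq0, hq1⟩ := hq _ hs
    have m0 : ((0 : ℕ), (0 : ℕ)) ∈ aoiiStates F G := by rw [aoii_mem]; omega
    rcases aoii_mem.mp hs with ⟨ha0, hb0⟩ | ⟨h1, h2, h3, h4⟩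
    · -- s = (0,0)
      subst ha0; subst hb0
      have hQ : 0 < Qfun F G pt q n (0, 0) := ih _ m0 (by omega)
      have hP : aoiiP F G pt q (0, 0) (0, 0) = 1 - 2 * pt := by simp [aoiiP]
      calc (0 : ℝ) < (1 - 2 * pt) * Qfun F G pt q n (0, 0) := mul_pos (by nlinarith) hQ
        _ = aoiiP F G pt q (0, 0) (0, 0) * Qfun F G pt q n (0, 0) := by rw [hP]
        _ ≤ _ := Qfun_lower hpt0 hpt hq n hs m0
    · rcases Nat.eq_or_lt_of_le h3 with hb1 | hb2
      · -- b = 1, jump to (0,0)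
        subst hb1
        have hQ : 0 < Qfun F G pt q n (0, 0) := ih _ m0 (by omega)
        have hne : ((a, 1) : ℕ × ℕ) ≠ (0, 0) := by simp
        have hP : aoiiP F G pt q (a, 1) (0, 0) = pt + (1 - pt) * q (a, 1) := by
          unfold aoiiP
          rw [if_neg hne, if_pos rfl]
          have e1 : ((0, 0) : ℕ × ℕ) ≠ (min (a + 1) F, 2) := by simp [Prod.ext_iff]
          have e2 : ((0, 0) : ℕ × ℕ) ≠ (min (a + 1) F, 1) := by simp [Prod.ext_iff]
          rw [if_neg e1, if_neg e2, if_pos rfl]; ring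
        calc (0 : ℝ) < (pt + (1 - pt) * q (a, 1)) * Qfun F G pt q n (0, 0) := mul_pos (by nlinarith) hQ
          _ = aoiiP F G pt q (a, 1) (0, 0) * Qfun F G pt q n (0, 0) := by rw [hP]
          _ ≤ _ := Qfun_lower hpt0 hpt hq n hs m0
      · -- 2 ≤ b, go down to (min (a+1) F, b - 1)
        set t : ℕ × ℕ := (min (a + 1) F, b - 1) with htdef
        have mt : t ∈ aoiiStates F G := by rw [htdef, aoii_mem]; omega
        have hQ : 0 < Qfun F G pt q n t := ih _ mt (by simp [htdef]; omega)
        have hne : ((a, b) : ℕ × ℕ) ≠ (0, 0) := by simp [Prod.ext_iff]; omega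
        have hb1 : ((a, b) : ℕ × ℕ).2 ≠ 1 := by simp; omega
        have hP : aoiiP F G pt q (a, b) t = pt * (1 - q (a, b)) := by
          unfold aoiiP
          rw [if_neg hne, if_neg hb1]
          have e1 : t ≠ ((min ((a, b).1 + 1) F, min ((a, b).2 + 1) G) : ℕ × ℕ) := by
            simp [htdef, Prod.ext_iff]; omega
          have e3 : t ≠ ((min ((a, b).1 + 1) F, (a, b).2) : ℕ × ℕ) := by
            simp [htdef, Prod.ext_iff]; omega
          have e4 : t ≠ ((0, 0) : ℕ × ℕ) := by simp [htdef, Prod.ext_iff]; omega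
          rw [if_neg e1, if_neg e3, if_neg e4, if_pos rfl]; ring
        calc (0 : ℝ) < pt * (1 - q (a, b)) * Qfun F G pt q n t := mul_pos (by nlinarith) hQ
          _ = aoiiP F G pt q (a, b) t * Qfun F G pt q n t := by rw [hP]
          _ ≤ _ := Qfun_lower hpt0 hpt hq n hs mt

lemma stat_Qfun {F G : ℕ} {pt : ℝ} {q : ℕ × ℕ → ℝ} (ψ : ℕ × ℕ → ℝ)
    (hstat : ∀ s' ∈ aoiiStates F G,
      ∑ s ∈ aoiiStates F G, ψ s * aoiiP F G pt q s s' = ψ s')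
    (h00 : ((0 : ℕ), (0 : ℕ)) ∈ aoiiStates F G) :
    ∀ n, ∑ s ∈ aoiiStates F G, ψ s * Qfun F G pt q n s = ψ (0, 0) := by
  intro n
  induction n with
  | zero =>
    have : ∀ s ∈ aoiiStates F G,
        ψ s * Qfun F G pt q 0 s = if s = ((0 : ℕ), (0 : ℕ)) then ψ s else 0 := by
      intro s _; unfold Qfun; split <;> simp
    rw [Finset.sum_congr rfl this, Finset.sum_ite_eq' _ ((0 : ℕ), (0 : ℕ)), if_pos h00]
  | succ n ih =>
    calc ∑ s ∈ aoiiStates F G, ψ s * Qfun F G pt q (n + 1) s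
        = ∑ s ∈ aoiiStates F G, ∑ s' ∈ aoiiStates F G,
            ψ s * aoiiP F G pt q s s' * Qfun F G pt q n s' := by
          refine Finset.sum_congr rfl fun s _ => ?_
          show ψ s * (∑ s' ∈ aoiiStates F G, aoiiP F G pt q s s' * Qfun F G pt q n s') = _
          rw [Finset.mul_sum]; simp [mul_assoc]
      _ = ∑ s' ∈ aoiiStates F G,
            (∑ s ∈ aoiiStates F G, ψ s * aoiiP F G pt q s s') * Qfun F G pt q n s' := by
          rw [Finset.sum_comm]
          refine Finset.sum_congr rfl fun s' _ => ?_
          rw [Finset.sum_mul]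
      _ = ∑ s' ∈ aoiiStates F G, ψ s' * Qfun F G pt q n s' := by
          refine Finset.sum_congr rfl fun s' hs' => ?_
          rw [hstat s' hs']
      _ = ψ (0, 0) := ih

lemma sign_of_abs_sum {ι : Type*} (s : Finset ι) (f : ι → ℝ)
    (h : |∑ i ∈ s, f i| = ∑ i ∈ s, |f i|) :
    (∀ i ∈ s, 0 ≤ f i) ∨ (∀ i ∈ s, f i ≤ 0) := by
  rcases le_or_gt 0 (∑ i ∈ s, f i) with hp | hn
  · left
    have h2 : ∑ j ∈ s, (|f j| - f j) = 0 := by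
      rw [Finset.sum_sub_distrib, ← h, abs_of_nonneg hp]; ring
    intro i hi
    have h3 := (Finset.sum_eq_zero_iff_of_nonneg
      (fun j _ => sub_nonneg.mpr (le_abs_self (f j)))).mp h2 i hi
    have h4 : f i = |f i| := by linarith
    rw [h4]; exact abs_nonneg _
  · right
    have h2 : ∑ j ∈ s, (|f j| + f j) = 0 := by
      rw [Finset.sum_add_distrib, ← h, abs_of_neg hn]; ring
    intro i hi
    have h3 := (Finset.sum_eq_zero_iff_of_nonneg
      (fun j _ => by linarith [neg_abs_le (f j)])).mp h2 i hi
    have h4 : f i = -|f i| := by linarith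
    rw [h4]; simp [abs_nonneg]

/-- The stationary distribution of the truncated AoII Markov chain is unique:
any two stationary distributions agree on the state space. -/
theorem aoii_stationary_unique (F G : ℕ) (hGF : G ≤ F) (hG : 2 ≤ G)
    (pt : ℝ) (hpt0 : 0 < pt) (hpt : pt < 1 / 2)
    (q : ℕ × ℕ → ℝ) (hq : ∀ s ∈ aoiiStates F G, 0 ≤ q s ∧ q s < 1)
    (hq0 : q (0, 0) = 0)
    (φ₁ φ₂ : ℕ × ℕ → ℝ)
    (h₁pos : ∀ s ∈ aoiiStates F G, 0 ≤ φ₁ s)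
    (h₁sum : ∑ s ∈ aoiiStates F G, φ₁ s = 1)
    (h₁stat : ∀ s' ∈ aoiiStates F G,
      ∑ s ∈ aoiiStates F G, φ₁ s * aoiiP F G pt q s s' = φ₁ s')
    (h₂pos : ∀ s ∈ aoiiStates F G, 0 ≤ φ₂ s)
    (h₂sum : ∑ s ∈ aoiiStates F G, φ₂ s = 1)
    (h₂stat : ∀ s' ∈ aoiiStates F G,
      ∑ s ∈ aoiiStates F G, φ₂ s * aoiiP F G pt q s s' = φ₂ s') :
    ∀ s ∈ aoiiStates F G, φ₁ s = φ₂ s := by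
  classical
  let ψ : ℕ × ℕ → ℝ := fun s => φ₁ s - φ₂ s
  have hψstat : ∀ s' ∈ aoiiStates F G,
      ∑ s ∈ aoiiStates F G, ψ s * aoiiP F G pt q s s' = ψ s' := by
    intro s' hs'
    have : ∀ s ∈ aoiiStates F G, ψ s * aoiiP F G pt q s s' =
        φ₁ s * aoiiP F G pt q s s' - φ₂ s * aoiiP F G pt q s s' := by
      intro s _; show (φ₁ s - φ₂ s) * _ = _; ring
    rw [Finset.sum_congr rfl this, Finset.sum_sub_distrib, h₁stat s' hs', h₂stat s' hs']
  have hψsum : ∑ s ∈ aoiiStates F G, ψ s = 0 := by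
    show ∑ s ∈ aoiiStates F G, (φ₁ s - φ₂ s) = 0
    rw [Finset.sum_sub_distrib, h₁sum, h₂sum]; ring
  let σ : ℕ × ℕ → ℝ := fun s => |ψ s|
  have hPnn : ∀ s ∈ aoiiStates F G, ∀ s', 0 ≤ aoiiP F G pt q s s' :=
    fun s hs s' => aoiiP_nonneg hpt0 hpt (hq s hs).1 (hq s hs).2 s'
  have hrow : ∀ s ∈ aoiiStates F G, ∑ s' ∈ aoiiStates F G, aoiiP F G pt q s s' = 1 :=
    fun s hs => aoiiP_row hGF hG pt q hs
  have hle : ∀ s' ∈ aoiiStates F G,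
      σ s' ≤ ∑ s ∈ aoiiStates F G, σ s * aoiiP F G pt q s s' := by
    intro s' hs'
    calc σ s' = |∑ s ∈ aoiiStates F G, ψ s * aoiiP F G pt q s s'| := by rw [hψstat s' hs']
      _ ≤ ∑ s ∈ aoiiStates F G, |ψ s * aoiiP F G pt q s s'| := Finset.abs_sum_le_sum_abs _ _
      _ = ∑ s ∈ aoiiStates F G, σ s * aoiiP F G pt q s s' := by
          refine Finset.sum_congr rfl fun s hs => ?_
          rw [abs_mul, abs_of_nonneg (hPnn s hs s')]
  have htot : ∑ s' ∈ aoiiStates F G,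
      (∑ s ∈ aoiiStates F G, σ s * aoiiP F G pt q s s' - σ s') = 0 := by
    rw [Finset.sum_sub_distrib, Finset.sum_comm]
    have : ∀ s ∈ aoiiStates F G, ∑ s' ∈ aoiiStates F G, σ s * aoiiP F G pt q s s' = σ s := by
      intro s hs; rw [← Finset.mul_sum, hrow s hs, mul_one]
    rw [Finset.sum_congr rfl this]; ring
  have hσstat : ∀ s' ∈ aoiiStates F G,
      ∑ s ∈ aoiiStates F G, σ s * aoiiP F G pt q s s' = σ s' := by
    intro s' hs'
    have h3 := (Finset.sum_eq_zero_iff_of_nonneg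
      (fun s'' hs'' => sub_nonneg.mpr (hle s'' hs''))).mp htot s' hs'
    linarith
  have h00 : ((0 : ℕ), (0 : ℕ)) ∈ aoiiStates F G := by rw [aoii_mem]; omega
  have hψQ := stat_Qfun ψ hψstat h00 G
  have hσQ := stat_Qfun σ hσstat h00 G
  have habs : |∑ s ∈ aoiiStates F G, ψ s * Qfun F G pt q G s| =
      ∑ s ∈ aoiiStates F G, |ψ s * Qfun F G pt q G s| := by
    rw [hψQ]
    have : ∑ s ∈ aoiiStates F G, |ψ s * Qfun F G pt q G s| =
        ∑ s ∈ aoiiStates F G, σ s * Qfun F G pt q G s := by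
      refine Finset.sum_congr rfl fun s hs => ?_
      rw [abs_mul, abs_of_nonneg (Qfun_nonneg hpt0 hpt hq G s hs)]
    rw [this, hσQ]
  have hsign := sign_of_abs_sum (aoiiStates F G) _ habs
  have hQpos : ∀ s ∈ aoiiStates F G, 0 < Qfun F G pt q G s := by
    intro s hs
    refine Qfun_pos hGF hG hpt0 hpt hq G s hs ?_
    obtain ⟨a, b⟩ := s
    have := aoii_mem.mp hs
    simp only []
    omega
  have key : (∀ s ∈ aoiiStates F G, 0 ≤ ψ s) ∨ (∀ s ∈ aoiiStates F G, ψ s ≤ 0) := by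
    rcases hsign with h | h
    · left; intro s hs
      have h1 := h s hs; have h2 := hQpos s hs; nlinarith
    · right; intro s hs
      have h1 := h s hs; have h2 := hQpos s hs; nlinarith
  intro s hs
  have hz : ψ s = 0 := by
    rcases key with h | h
    · exact (Finset.sum_eq_zero_iff_of_nonneg h).mp hψsum s hs
    · exact (Finset.sum_eq_zero_iff_of_nonpos h).mp hψsum s hs
  have : φ₁ s - φ₂ s = 0 := hz
  linarith
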